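/- Let W be the complex Lie algebra with basis {L_n : n ∈ ℤ} and bracket [L_m, L_n] = (m−n) L_{m+n}, and let ω be the bilinear form with ω(L_m, L_n) = δ_{m+n,0}(m³ − m). Then for every 2-cocycle c on W (an alternating bilinear map c : W × W → ℂ with c([x,y],z) + c([y,z],x) + c([z,x],y) = 0) there exist a unique scalar λ ∈ ℂ and a unique linear functional f : W → ℂ such that c(x,y) = λ·ω(x,y) + f([x,y]) for all x, y ∈ W. In particular, the second cohomology H²(W; ℂ) is one-dimensional, and the Virasoro algebra is the unique nontrivial one-dimensional central extension of W up to isomorphism. -/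

import Mathlib

/-!
Evaluate a cocycle on the basis, `C m n = c(L_m, L_n)`. The cocycle identity for `(L_m, L_n, L_0)`
gives `(m + n) C m n = (m - n) C (m+n) 0`, so off the antidiagonal `c` agrees with the coboundary
of `f(L_k) = C k 0 / k`. On the antidiagonal the identity for `(L_k, L_1, L_{-k-1})` is a
first-order recursion `(k - 1) a(k+1) = (k + 2) a(k) - (2k + 1) a(1)` for the odd sequence
`a(k) = C k (-k)`; its solutions form the plane spanned by `k³ - k` (the Virasoro cocycle) and
`k` (a coboundary). Uniqueness holds because `ω` is not a coboundary: `ω(L_2, L_{-2}) = 6` while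
`ω(L_1, L_{-1}) = 0`, whereas `f([L_m, L_{-m}]) = 2m f(L_0)` is linear in `m`.
-/

/-- The Witt algebra bracket on the `ℂ`-vector space `W` with basis `{L_n : n ∈ ℤ}`
(modeled as `ℤ →₀ ℂ`, `L_n = Finsupp.single n 1`), the bilinear map determined by
`[L_m, L_n] = (m − n) L_{m+n}`. -/
noncomputable def wittBracket : (ℤ →₀ ℂ) →ₗ[ℂ] (ℤ →₀ ℂ) →ₗ[ℂ] (ℤ →₀ ℂ) :=
  Finsupp.lsum ℂ fun m => LinearMap.toSpanSingleton ℂ _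
    (Finsupp.lsum ℂ fun n => ((m : ℂ) - (n : ℂ)) • Finsupp.lsingle (m + n))

/-- The Virasoro cocycle `ω` on the Witt algebra, the bilinear form determined by
`ω(L_m, L_n) = (m³ − m)` if `m + n = 0` and `ω(L_m, L_n) = 0` otherwise. -/
noncomputable def virOmega : (ℤ →₀ ℂ) →ₗ[ℂ] (ℤ →₀ ℂ) →ₗ[ℂ] ℂ :=
  Finsupp.lsum ℂ fun m => LinearMap.toSpanSingleton ℂ _
    (Finsupp.lsum ℂ fun n =>
      LinearMap.toSpanSingleton ℂ ℂ (if m + n = 0 then ((m ^ 3 - m : ℤ) : ℂ) else 0))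

open Finsupp

lemma wittBracket_single_single (m n : ℤ) :
    wittBracket (single m 1) (single n 1) = ((m : ℂ) - n) • single (m + n) 1 := by
  simp only [wittBracket, lsum_single, LinearMap.toSpanSingleton_apply, one_smul,
    LinearMap.smul_apply, lsingle_apply]

lemma virOmega_single_single (m n : ℤ) :
    virOmega (single m 1) (single n 1) = if m + n = 0 then ((m ^ 3 - m : ℤ) : ℂ) else 0 := by
  simp only [virOmega, lsum_single, LinearMap.toSpanSingleton_apply, one_smul, smul_eq_mul,
    one_mul]

structure IsWittCocycleMatrix (C : ℤ → ℤ → ℂ) : Prop where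
  antisymm : ∀ m n : ℤ, C n m = -C m n
  cocycle : ∀ m n p : ℤ, ((m : ℂ) - n) * C (m + n) p + ((n : ℂ) - p) * C (n + p) m
    + ((p : ℂ) - m) * C (p + m) n = 0

lemma isWittCocycleMatrix_of_isAlt {c : (ℤ →₀ ℂ) →ₗ[ℂ] (ℤ →₀ ℂ) →ₗ[ℂ] ℂ} (halt : c.IsAlt)
    (hcoc : ∀ x y z : ℤ →₀ ℂ,
      c (wittBracket x y) z + c (wittBracket y z) x + c (wittBracket z x) y = 0) :
    IsWittCocycleMatrix fun m n => c (single m 1) (single n 1) where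
  antisymm m n := (halt.neg _ _).symm
  cocycle m n p := by
    simpa only [wittBracket_single_single, map_smul, LinearMap.smul_apply, smul_eq_mul]
      using hcoc (single m 1) (single n 1) (single p 1)

lemma eq_zero_of_odd_of_recurrence {b : ℤ → ℂ} (hodd : ∀ m, b (-m) = -b m) (h1 : b 1 = 0)
    (h2 : b 2 = 0) (hrec : ∀ k : ℤ, ((k : ℂ) - 1) * b (k + 1) = (k + 2) * b k) (m : ℤ) :
    b m = 0 := by
  have hpos : ∀ m : ℤ, 1 ≤ m → b m = 0 := by
    intro m hm
    induction m, hm using Int.leInduction with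
    | base => exact h1
    | succ k hk ih =>
      rcases eq_or_lt_of_le hk with rfl | hk
      · exact h2
      · have hk1 : (k : ℂ) - 1 ≠ 0 := sub_ne_zero.mpr (by exact_mod_cast hk.ne')
        simpa [ih, hk1] using hrec k
  rcases lt_trichotomy m 0 with hm | rfl | hm
  · rw [← neg_neg m, hodd, hpos (-m) (by omega), neg_zero]
  · simpa [CharZero.eq_neg_self_iff] using hodd 0
  · exact hpos m hm

namespace IsWittCocycleMatrix

variable {C : ℤ → ℤ → ℂ} (hC : IsWittCocycleMatrix C)
include hC

lemma add_mul_eq (m n : ℤ) : ((m : ℂ) + n) * C m n = ((m : ℂ) - n) * C (m + n) 0 := by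
  have h := hC.cocycle m n 0
  rw [add_zero, zero_add, hC.antisymm m n] at h
  push_cast at h
  linear_combination -h

lemma neg_diag (m : ℤ) : C (-m) m = -C m (-m) := by
  simpa using hC.antisymm m (-m)

lemma diag_recurrence (k : ℤ) :
    ((k : ℂ) - 1) * C (k + 1) (-(k + 1))
      = ((k : ℂ) + 2) * C k (-k) - (2 * (k : ℂ) + 1) * C 1 (-1) := by
  have h := hC.cocycle k 1 (-(k + 1))
  rw [show (1 : ℤ) + -(k + 1) = -k by ring, show -(k + 1) + k = -1 by ring,
    hC.neg_diag, hC.antisymm 1 (-1)] at h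
  push_cast at h
  linear_combination h

lemma diag_eq (m : ℤ) :
    C m (-m) = (C 2 (-2) - 2 * C 1 (-1)) / 6 * ((m : ℂ) ^ 3 - m) + C 1 (-1) * m := by
  set lam := (C 2 (-2) - 2 * C 1 (-1)) / 6
  have key := eq_zero_of_odd_of_recurrence
    (b := fun m : ℤ => C m (-m) - lam * ((m : ℂ) ^ 3 - m) - C 1 (-1) * m)
    (fun m => by push_cast; rw [neg_neg, hC.neg_diag]; ring) (by norm_num)
    (by norm_num [lam]; ring)
    (fun k => by push_cast; linear_combination hC.diag_recurrence k) m
  linear_combination key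

end IsWittCocycleMatrix

lemma exists_eq_smul_virOmega_add_comp_wittBracket {c : (ℤ →₀ ℂ) →ₗ[ℂ] (ℤ →₀ ℂ) →ₗ[ℂ] ℂ}
    (hc : IsWittCocycleMatrix fun m n => c (single m 1) (single n 1)) :
    ∃ (lam : ℂ) (f : (ℤ →₀ ℂ) →ₗ[ℂ] ℂ),
      ∀ x y, c x y = lam * virOmega x y + f (wittBracket x y) := by
  set C := fun m n : ℤ => c (single m 1) (single n 1)
  -- `f([L_m, L_{-m}]) = 2m f(L_0)` has to supply the term `C 1 (-1) * m` of `diag_eq`.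
  let F : ℤ → ℂ := fun k => if k = 0 then C 1 (-1) / 2 else C k 0 / k
  set lam := (C 2 (-2) - 2 * C 1 (-1)) / 6
  suffices hext : c = lam • virOmega + wittBracket.compr₂ (linearCombination ℂ F) from
    ⟨lam, linearCombination ℂ F, fun x y => by rw [hext]; rfl⟩
  ext m n
  simp only [LinearMap.coe_comp, Function.comp_apply, lsingle_apply, LinearMap.add_apply,
    LinearMap.smul_apply, LinearMap.compr₂_apply, smul_eq_mul, virOmega_single_single,
    wittBracket_single_single, map_smul, linearCombination_single, F]
  by_cases hmn : m + n = 0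
  · obtain rfl : n = -m := by omega
    simp only [hmn, if_true]
    push_cast
    linear_combination hc.diag_eq m
  · have hne : (m : ℂ) + n ≠ 0 := by exact_mod_cast hmn
    simp only [hmn, if_false]
    push_cast
    rw [mul_zero, zero_add, one_mul, ← mul_div_assoc, eq_div_iff hne]
    linear_combination hc.add_mul_eq m n

lemma eq_zero_of_smul_virOmega_add_comp_wittBracket_eq_zero {lam : ℂ}
    {f : (ℤ →₀ ℂ) →ₗ[ℂ] ℂ} (h : ∀ x y, lam * virOmega x y + f (wittBracket x y) = 0) :
    lam = 0 ∧ f = 0 := by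
  have hL : ∀ m n : ℤ, lam * (if m + n = 0 then ((m ^ 3 - m : ℤ) : ℂ) else 0)
      + ((m : ℂ) - n) * f (single (m + n) 1) = 0 := fun m n => by
    simpa only [virOmega_single_single, wittBracket_single_single, map_smul, smul_eq_mul]
      using h (single m 1) (single n 1)
  have h0 : f (single 0 1) = 0 := by simpa using hL 1 (-1)
  have hlam : lam = 0 := by
    have h2 := hL 2 (-2)
    norm_num [h0] at h2
    exact h2
  refine ⟨hlam, Finsupp.lhom_ext' fun k => LinearMap.ext_ring ?_⟩
  rcases eq_or_ne k 0 with rfl | hk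
  · exact h0
  · simpa [hk] using hL k 0

/-- Every 2-cocycle `c` on the Witt algebra (an alternating bilinear form satisfying the
cocycle identity) is cohomologous to a unique multiple of the Virasoro cocycle `ω`:
there exist a unique scalar `λ ∈ ℂ` and a unique linear functional `f` such that
`c(x,y) = λ·ω(x,y) + f([x,y])` for all `x, y`. In particular `H²(W;ℂ)` is one-dimensional
and the Virasoro algebra is the unique nontrivial one-dimensional central extension. -/
theorem witt_second_cohomology_one_dimensional
    (c : (ℤ →₀ ℂ) →ₗ[ℂ] (ℤ →₀ ℂ) →ₗ[ℂ] ℂ)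
    (halt : ∀ x : ℤ →₀ ℂ, c x x = 0)
    (hcoc : ∀ x y z : ℤ →₀ ℂ,
      c (wittBracket x y) z + c (wittBracket y z) x + c (wittBracket z x) y = 0) :
    ∃! lf : ℂ × ((ℤ →₀ ℂ) →ₗ[ℂ] ℂ),
      ∀ x y : ℤ →₀ ℂ, c x y = lf.1 * virOmega x y + lf.2 (wittBracket x y) := by
  obtain ⟨lam, f, hcf⟩ :=
    exists_eq_smul_virOmega_add_comp_wittBracket (isWittCocycleMatrix_of_isAlt halt hcoc)
  refine ⟨(lam, f), hcf, ?_⟩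
  rintro ⟨lam', f'⟩ hcf'
  dsimp only at hcf'
  obtain ⟨hlam, hf⟩ := eq_zero_of_smul_virOmega_add_comp_wittBracket_eq_zero
    (lam := lam' - lam) (f := f' - f) fun x y => by
      rw [LinearMap.sub_apply]
      linear_combination hcf x y - hcf' x y
  rw [sub_eq_zero.mp hlam, sub_eq_zero.mp hf]
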